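/- Let {Π_i}_{i=1}^M be nonzero orthogonal projections on a finite-dimensional complex Hilbert space ℋ with Π_i Π_j = δ_{ij} Π_i and ∑_{i=1}^M Π_i = I. Then the Von Neumann–Lüders instrument whose i-th outcome has the single Kraus operator Π_i, i.e. with Choi operators N_i = |Π_i⟩⟩⟨⟨Π_i| (corresponding to the maps ρ ↦ Π_i ρ Π_i), is an extremal quantum instrument. -/

import Mathlib

open Matrix Kronecker
open scoped ComplexOrder

/-- The rank-one operator `|A⟩⟩⟨⟨B|` on `ℋ₁ ⊗ ℋ₀` built from the vectorizations
`|A⟩⟩ = (A ⊗ I)∑ⱼ |j⟩⊗|j⟩` of linear maps `A B : ℋ₀ → ℋ₁`. -/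
def outerCJ {d₁ d₀ : ℕ} (A B : Matrix (Fin d₁) (Fin d₀) ℂ) :
    Matrix (Fin d₁ × Fin d₀) (Fin d₁ × Fin d₀) ℂ :=
  fun p q => A p.1 p.2 * star (B q.1 q.2)

/-- A quantum instrument with `M` outcomes from `ℋ₀` to `ℋ₁`, described by its
Choi–Jamiołkowski operators: positive semidefinite operators on `ℋ₁ ⊗ ℋ₀` whose
sum has partial trace over `ℋ₁` equal to the identity on `ℋ₀`. -/
def IsInstrument (d₁ d₀ M : ℕ)
    (N : Fin M → Matrix (Fin d₁ × Fin d₀) (Fin d₁ × Fin d₀) ℂ) : Prop :=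
  (∀ i, (N i).PosSemidef) ∧
    Matrix.of (fun j j_ : Fin d₀ => ∑ k : Fin d₁, (∑ i, N i) (k, j) (k, j_))
      = (1 : Matrix (Fin d₀) (Fin d₀) ℂ)

/-!
Each `Nᵢ = |Πᵢ⟩⟩⟨⟨Πᵢ|` is a rank-one positive operator, so in any decomposition
`N = a X + b Y` of the Lüders instrument into instruments with `a, b > 0`, every `Xᵢ` is dominated
by `Nᵢ` and hence `Xᵢ = eᵢ Nᵢ`. Because `Πᵢ* Πᵢ = Πᵢ`, the partial trace of `∑ eᵢ Nᵢ` is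
`(∑ eᵢ Πᵢ)ᵀ`, so the normalization of `X` gives `∑ eᵢ Πᵢ = I`; multiplying by `Πⱼ ≠ 0` yields
`eⱼ = 1`, i.e. `X = N`.
-/

namespace Matrix

variable {n 𝕜 : Type*} [Fintype n] [RCLike 𝕜]

theorem PosSemidef.mulVec_eq_zero_of_dotProduct_eq_zero {A : Matrix n n 𝕜} (hA : A.PosSemidef)
    {v : n → 𝕜} (hle : (vecMulVec v (star v) - A).PosSemidef) {x : n → 𝕜}
    (hx : star v ⬝ᵥ x = 0) : A *ᵥ x = 0 := by
  rw [← hA.dotProduct_mulVec_zero_iff]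
  have h := hle.dotProduct_mulVec_nonneg x
  rw [sub_mulVec, dotProduct_sub, vecMulVec_mulVec, hx] at h
  exact le_antisymm (by simpa using h) (hA.dotProduct_mulVec_nonneg x)

theorem PosSemidef.exists_eq_smul_vecMulVec_of_posSemidef_sub {A : Matrix n n 𝕜}
    (hA : A.PosSemidef) {v : n → 𝕜} (hv : v ≠ 0)
    (hle : (vecMulVec v (star v) - A).PosSemidef) :
    ∃ c : 𝕜, A = c • vecMulVec v (star v) := by
  set r := star v ⬝ᵥ v
  have hr : r ≠ 0 := fun h => hv (dotProduct_star_self_eq_zero.mp h)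
  have hr_star : star r = r := (star_dotProduct v v).symm
  -- `A` vanishes on `v⊥`, so `r • A = (A v) v*`; hermiticity of `A` then makes `A v` parallel
  -- to `v`.
  have hleft : r • A = vecMulVec (A *ᵥ v) (star v) := by
    refine ext_iff_mulVec.mpr fun x => ?_
    have hperp : star v ⬝ᵥ (r • x - (star v ⬝ᵥ x) • v) = 0 := by
      rw [dotProduct_sub, dotProduct_smul, dotProduct_smul, smul_eq_mul, smul_eq_mul, mul_comm,
        sub_self]
    have := hA.mulVec_eq_zero_of_dotProduct_eq_zero hle hperp
    rw [mulVec_sub, mulVec_smul, mulVec_smul, sub_eq_zero] at this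
    rw [smul_mulVec, this, vecMulVec_mulVec, op_smul_eq_smul]
  have hright : r • A = vecMulVec v (star (A *ᵥ v)) := by
    simpa [conjTranspose_smul, hr_star, hA.1.eq, conjTranspose_vecMulVec] using
      congrArg (·ᴴ) hleft
  have hAv : r • (A *ᵥ v) = (star (A *ᵥ v) ⬝ᵥ v) • v := by
    rw [← smul_mulVec, hright, vecMulVec_mulVec, op_smul_eq_smul]
  have hsq : r ^ 2 • A = (star (A *ᵥ v) ⬝ᵥ v) • vecMulVec v (star v) := by
    rw [pow_two, mul_smul, hleft, ← smul_vecMulVec, hAv, smul_vecMulVec]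
  refine ⟨(r ^ 2)⁻¹ * (star (A *ᵥ v) ⬝ᵥ v), ?_⟩
  rw [mul_smul, ← hsq, smul_smul, inv_mul_cancel₀ (pow_ne_zero 2 hr), one_smul]

theorem PosSemidef.exists_eq_smul_vecMulVec_of_smul_add_smul_eq {X Y : Matrix n n 𝕜}
    (hX : X.PosSemidef) (hY : Y.PosSemidef) {a b : ℝ} (ha : 0 < a) (hb : 0 ≤ b) {v : n → 𝕜}
    (hv : v ≠ 0) (h : a • X + b • Y = vecMulVec v (star v)) :
    ∃ c : 𝕜, X = c • vecMulVec v (star v) := by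
  have hle : (vecMulVec v (star v) - a • X).PosSemidef := by
    rw [← h, add_sub_cancel_left]
    exact hY.smul hb
  obtain ⟨c, hc⟩ := (hX.smul ha.le).exists_eq_smul_vecMulVec_of_posSemidef_sub hv hle
  exact ⟨a⁻¹ • c, by rw [smul_assoc, ← hc, inv_smul_smul₀ ha.ne']⟩

end Matrix

theorem OrthogonalIdempotents.eq_one_of_sum_smul_eq_one {I 𝕜 R : Type*} [Fintype I] [Field 𝕜]
    [Ring R] [Module 𝕜 R] [IsScalarTower 𝕜 R R] {e : I → R}
    (he : OrthogonalIdempotents e) {c : I → 𝕜} (hc : ∑ i, c i • e i = 1) {j : I}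
    (hj : e j ≠ 0) : c j = 1 := by
  classical
  have hcj : c j • e j = e j := by
    simpa [Finset.sum_mul, smul_mul_assoc, he.mul_eq] using congrArg (· * e j) hc
  rw [← sub_eq_zero]
  exact (smul_eq_zero.mp (by rw [sub_smul, one_smul, hcj, sub_self])).resolve_right hj

def partialTraceLeft {d₁ d₀ : ℕ} (N : Matrix (Fin d₁ × Fin d₀) (Fin d₁ × Fin d₀) ℂ) :
    Matrix (Fin d₀) (Fin d₀) ℂ :=
  Matrix.of fun j j' => ∑ k, N (k, j) (k, j')

theorem isInstrument_iff {d₁ d₀ M : ℕ}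
    {N : Fin M → Matrix (Fin d₁ × Fin d₀) (Fin d₁ × Fin d₀) ℂ} :
    IsInstrument d₁ d₀ M N ↔ (∀ i, (N i).PosSemidef) ∧ partialTraceLeft (∑ i, N i) = 1 :=
  Iff.rfl

theorem outerCJ_eq_vecMulVec {d₁ d₀ : ℕ} (A B : Matrix (Fin d₁) (Fin d₀) ℂ) :
    outerCJ A B = vecMulVec (vec Aᵀ) (star (vec Bᵀ)) :=
  rfl

theorem partialTraceLeft_sum_smul_outerCJ {ι : Type*} [Fintype ι] {d₁ d₀ : ℕ}
    (K : ι → Matrix (Fin d₁) (Fin d₀) ℂ) (c : ι → ℂ) :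
    partialTraceLeft (∑ i, c i • outerCJ (K i) (K i)) = (∑ i, c i • ((K i)ᴴ * K i))ᵀ := by
  ext j j'
  simp only [partialTraceLeft, of_apply, Matrix.sum_apply, Matrix.smul_apply, transpose_apply,
    mul_apply, conjTranspose_apply, outerCJ, smul_eq_mul, Finset.mul_sum]
  rw [Finset.sum_comm]
  exact Finset.sum_congr rfl fun i _ => Finset.sum_congr rfl fun k _ => by ring

theorem stmt_19 {d M : ℕ}
    (Pr : Fin M → Matrix (Fin d) (Fin d) ℂ)
    (hherm : ∀ i, (Pr i).IsHermitian)
    (hne : ∀ i, Pr i ≠ 0)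
    (horth : ∀ i j, Pr i * Pr j = if i = j then Pr i else 0)
    (hsum : ∑ i, Pr i = 1) :
    (fun i => outerCJ (Pr i) (Pr i)) ∈
      {W | IsInstrument d d M W}.extremePoints ℝ := by
  have hidem : OrthogonalIdempotents Pr := OrthogonalIdempotents.iff_mul_eq.mpr horth
  have htrace (c : Fin M → ℂ) :
      partialTraceLeft (∑ i, c i • outerCJ (Pr i) (Pr i)) = (∑ i, c i • Pr i)ᵀ := by
    simpa only [(hherm _).eq, (hidem.idem _).eq] using partialTraceLeft_sum_smul_outerCJ Pr c
  have hpsd (i : Fin M) : (outerCJ (Pr i) (Pr i)).PosSemidef := by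
    rw [outerCJ_eq_vecMulVec]
    exact posSemidef_vecMulVec_self_star _
  have hmem : IsInstrument d d M fun i => outerCJ (Pr i) (Pr i) :=
    isInstrument_iff.mpr ⟨hpsd, by simpa [hsum] using htrace 1⟩
  refine mem_extremePoints_iff_left.mpr ⟨hmem, fun x₁ hx₁ x₂ hx₂ ⟨a, b, ha, hb, _, hx⟩ => ?_⟩
  have hvec (i : Fin M) : vec (Pr i)ᵀ ≠ 0 := by simpa using hne i
  have hx₁_rank_one (i : Fin M) : ∃ c : ℂ, x₁ i = c • outerCJ (Pr i) (Pr i) := by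
    rw [outerCJ_eq_vecMulVec]
    exact PosSemidef.exists_eq_smul_vecMulVec_of_smul_add_smul_eq (hx₁.1 i) (hx₂.1 i) ha hb.le
      (hvec i) (congr_fun hx i)
  choose e he using hx₁_rank_one
  have hsum_e : ∑ i, e i • Pr i = 1 := by
    rw [← transpose_inj, ← htrace, transpose_one]
    simpa only [he] using (isInstrument_iff.mp hx₁).2
  funext i
  rw [he i, hidem.eq_one_of_sum_smul_eq_one hsum_e (hne i), one_smul]
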